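/- For any nonnegative integer n, the sum over k from 0 to n of (2^{1-2k} - 1) * zeta(2k) * (pi*i)^{2n-2k} / (2n-2k+1)! equals -1/2 if n = 0 and 0 if n >= 1, where zeta is the Riemann zeta function (with zeta(0) = -1/2). -/

import Mathlib

/-!
By Euler's formula for `ζ(2k)`, the `k`-th summand is `-(πi)^{2n} / 2` times
`c_{2k} / (2(n-k)+1)!`, where `c_j = (2 - 2^j) B_j / j!`.
The `c_j` are the coefficients of `2B(X) - B(2X) = 2X e^X / (e^{2X} - 1)`, with
`B(X) = X / (e^X - 1)` the Bernoulli series, so `(2B(X) - B(2X)) (e^X - e^{-X}) = 2X`.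
Since `e^X - e^{-X} = 2 ∑ X^{2m+1} / (2m+1)!`, the coefficient of `X^{2n+1}` of this identity
is twice the rational sum, which is therefore `1` if `n = 0` and `0` otherwise.
-/

open Finset PowerSeries Complex

theorem Finset.sum_range_two_mul {M : Type*} [AddCommMonoid M] (f : ℕ → M) (n : ℕ) :
    ∑ i ∈ range (2 * n), f i = ∑ k ∈ range n, (f (2 * k) + f (2 * k + 1)) := by
  induction n with
  | zero => simp
  | succ n ih =>
    rw [mul_add, mul_one, sum_range_succ, sum_range_succ, sum_range_succ, ih, add_assoc]

namespace PowerSeries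

variable (A : Type*) [CommRing A] [Algebra ℚ A]

theorem coeff_exp_sub_evalNegHom_exp (j : ℕ) :
    coeff j (exp A - evalNegHom (exp A)) = (1 - (-1) ^ j) * algebraMap ℚ A (1 / j.factorial) := by
  simp only [evalNegHom, map_sub, coeff_rescale, coeff_exp]
  rw [sub_mul, one_mul]

theorem coeff_two_mul_bernoulliPowerSeries_sub_rescale (j : ℕ) :
    coeff j (2 * bernoulliPowerSeries A - rescale 2 (bernoulliPowerSeries A)) =
      (2 - 2 ^ j) * algebraMap ℚ A (bernoulli j / j.factorial) := by
  rw [← map_ofNat C 2, map_sub, coeff_C_mul, coeff_rescale, bernoulliPowerSeries, coeff_mk,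
    sub_mul]

theorem two_mul_bernoulliPowerSeries_sub_rescale_mul_exp_sub_evalNegHom_exp :
    (2 * bernoulliPowerSeries A - rescale 2 (bernoulliPowerSeries A)) *
      (exp A - evalNegHom (exp A)) = 2 * X := by
  have hB := bernoulliPowerSeries_mul_exp_sub_one A
  have hB₂ : rescale 2 (bernoulliPowerSeries A) * (exp A ^ 2 - 1) = 2 * X := by
    have := congrArg (rescale (2 : A)) hB
    rwa [map_mul, map_sub, map_one, rescale_X, map_ofNat, ← Nat.cast_ofNat,
      ← exp_pow_eq_rescale_exp] at this
  linear_combination evalNegHom (exp A) * (2 * (exp A + 1) * hB - hB₂) +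
    (2 * X - (2 * bernoulliPowerSeries A - rescale 2 (bernoulliPowerSeries A)) * exp A) *
      exp_mul_exp_neg_eq_one (A := A)

end PowerSeries

theorem sum_bernoulli_div_factorial_mul_factorial (n : ℕ) :
    ∑ k ∈ range (n + 1), (2 - 2 ^ (2 * k)) * bernoulli (2 * k) /
      ((2 * k).factorial * (2 * (n - k) + 1).factorial) = if n = 0 then 1 else 0 := by
  have h := congrArg (coeff (2 * n + 1))
    (two_mul_bernoulliPowerSeries_sub_rescale_mul_exp_sub_evalNegHom_exp ℚ)
  rw [coeff_mul, Nat.sum_antidiagonal_eq_sum_range_succ (fun i j => coeff i _ * coeff j _),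
    show (2 * n + 1).succ = 2 * (n + 1) by omega, sum_range_two_mul] at h
  -- each odd-indexed term meets an even coefficient of `e^X - e^{-X}`, which vanishes
  have hterm : ∀ k ∈ range (n + 1),
      coeff (2 * k) (2 * bernoulliPowerSeries ℚ - rescale 2 (bernoulliPowerSeries ℚ)) *
          coeff (2 * n + 1 - 2 * k) (exp ℚ - evalNegHom (exp ℚ)) +
        coeff (2 * k + 1) (2 * bernoulliPowerSeries ℚ - rescale 2 (bernoulliPowerSeries ℚ)) *
          coeff (2 * n + 1 - (2 * k + 1)) (exp ℚ - evalNegHom (exp ℚ)) =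
      2 * ((2 - 2 ^ (2 * k)) * bernoulli (2 * k) /
        ((2 * k).factorial * (2 * (n - k) + 1).factorial)) := by
    intro k hk
    have hk : k ≤ n := Nat.lt_succ_iff.mp (mem_range.mp hk)
    rw [show 2 * n + 1 - 2 * k = 2 * (n - k) + 1 by omega,
      show 2 * n + 1 - (2 * k + 1) = 2 * (n - k) by omega]
    simp only [coeff_two_mul_bernoulliPowerSeries_sub_rescale, coeff_exp_sub_evalNegHom_exp,
      pow_succ, pow_mul, Algebra.algebraMap_self, RingHom.id_apply]
    field_simp
    ring
  rw [sum_congr rfl hterm, ← mul_sum, ← map_ofNat C 2, coeff_C_mul, coeff_X] at h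
  simp only [show 2 * n + 1 = 1 ↔ n = 0 by omega] at h
  exact mul_left_cancel₀ two_ne_zero h

theorem two_zpow_one_sub_sub_one_mul_riemannZeta_two_mul_nat (k : ℕ) :
    ((2 : ℂ) ^ ((1 : ℤ) - 2 * k) - 1) * riemannZeta (2 * k) =
      -((Real.pi : ℂ) * I) ^ (2 * k) *
        ((2 - 2 ^ (2 * k)) * bernoulli (2 * k) / (2 * (2 * k).factorial)) := by
  have h₁ : (2 : ℂ) ^ ((1 : ℤ) - 2 * k) = 2 / 2 ^ (2 * k) := by
    rw [zpow_sub₀ two_ne_zero, zpow_one]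
    norm_cast
  have h₂ : (2 : ℂ) ^ (2 * k - 1 : ℤ) = 2 ^ (2 * k) / 2 := by
    rw [zpow_sub₀ two_ne_zero, zpow_one]
    norm_cast
  rw [riemannZeta_two_mul_nat', h₁, h₂, mul_pow, pow_mul I, I_sq, pow_mul (Real.pi : ℂ)]
  field_simp
  ring

theorem zeta_odd_sum (n : ℕ) :
    ∑ k ∈ Finset.range (n + 1),
      ((2 : ℂ) ^ ((1 : ℤ) - 2 * k) - 1) * riemannZeta (2 * k) *
        ((Real.pi : ℂ) * Complex.I) ^ (2 * (n - k)) / (Nat.factorial (2 * (n - k) + 1))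
    = if n = 0 then -1 / 2 else 0 := by
  have hterm : ∀ k ∈ range (n + 1),
      ((2 : ℂ) ^ ((1 : ℤ) - 2 * k) - 1) * riemannZeta (2 * k) *
        ((Real.pi : ℂ) * I) ^ (2 * (n - k)) / (Nat.factorial (2 * (n - k) + 1)) =
      -((Real.pi : ℂ) * I) ^ (2 * n) / 2 *
        (((2 - 2 ^ (2 * k)) * bernoulli (2 * k) /
          ((2 * k).factorial * (2 * (n - k) + 1).factorial) : ℚ) : ℂ) := by
    intro k hk
    have hn : 2 * n = 2 * k + 2 * (n - k) := by have := mem_range.mp hk; omega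
    rw [two_zpow_one_sub_sub_one_mul_riemannZeta_two_mul_nat, hn, pow_add]
    push_cast
    field_simp
  rw [sum_congr rfl hterm, ← mul_sum, ← Rat.cast_sum, sum_bernoulli_div_factorial_mul_factorial]
  split_ifs with hn <;> simp [hn]
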